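/- arXiv:1612.09245 — 4 statements merged into one kernel-verified Lean document; each statement's English description precedes it below -/
import Mathlib

section
/- Let n ≥ 3 and assume the exponent conditions p, q ≥ 1, r, s ≥ 0, p - s ≥ q - r > -1, and a, b > n/(n-2) with a, b defined by a = n(pq-(r-1)(s-1))/(2(p-s+1)), b = n(pq-(r-1)(s-1))/(2(q-r+1)). If s ≥ 1, then q + s > n/(n-2). -/
/-!
Since `s ≥ 1` and `p - s ≥ q - r`, the numerator of `a` is at most `(q + s - 1)(p - s + 1)`,
the difference being `(s - 1)((p - s) - (q - r))`. Hence `n/(n-2) < a ≤ n(q + s - 1)/2`, and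
`n/(n-2) < n K/2` is equivalent to `n/(n-2) < K + 1` because `n/(n-2) = 1 + 2/(n-2)`.
-/

theorem mul_sub_sub_one_mul_sub_one_le {p q r s : ℝ} (hs : 1 ≤ s) (h : q - r ≤ p - s) :
    p * q - (r - 1) * (s - 1) ≤ (q + s - 1) * (p - s + 1) := by
  nlinarith [mul_nonneg (sub_nonneg.2 hs) (sub_nonneg.2 h)]

theorem div_sub_two_lt_mul_div_two_iff {m K : ℝ} (hm : 2 < m) :
    m / (m - 2) < m * K / 2 ↔ m / (m - 2) < K + 1 := by
  have hm2 : 0 < m - 2 := by linarith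
  rw [div_lt_div_iff₀ hm2 two_pos, div_lt_iff₀ hm2]
  constructor <;> intro h <;> nlinarith

theorem mul_div_two_mul_le {m N K D : ℝ} (hm : 0 ≤ m) (hD : 0 < D) (h : N ≤ K * D) :
    m * N / (2 * D) ≤ m * K / 2 := by
  calc m * N / (2 * D) ≤ m * (K * D) / (2 * D) := by gcongr
    _ = m * K / 2 := by field_simp

theorem stmt_3_general (n : ℕ) (hn : 3 ≤ n) (p q r s : ℝ)
    (h1 : q - r ≤ p - s) (h2 : -1 < q - r)
    (a : ℝ)
    (ha : a = n * (p * q - (r - 1) * (s - 1)) / (2 * (p - s + 1)))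
    (ha' : (n : ℝ) / (n - 2) < a)
    (hs1 : 1 ≤ s) :
    (n : ℝ) / (n - 2) < q + s := by
  have hn2 : (2 : ℝ) < n := by exact_mod_cast hn
  have ha_le : a ≤ n * (q + s - 1) / 2 :=
    ha ▸ mul_div_two_mul_le (Nat.cast_nonneg n) (by linarith)
      (mul_sub_sub_one_mul_sub_one_le hs1 h1)
  simpa using (div_sub_two_lt_mul_div_two_iff hn2).1 (ha'.trans_le ha_le)

theorem stmt_3 (n : ℕ) (hn : 3 ≤ n) (p q r s : ℝ)
    (hp : 1 ≤ p) (hq : 1 ≤ q) (hr : 0 ≤ r) (hs : 0 ≤ s)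
    (h1 : q - r ≤ p - s) (h2 : -1 < q - r)
    (a b : ℝ)
    (ha : a = n * (p * q - (r - 1) * (s - 1)) / (2 * (p - s + 1)))
    (hb : b = n * (p * q - (r - 1) * (s - 1)) / (2 * (q - r + 1)))
    (ha' : (n : ℝ) / (n - 2) < a) (hb' : (n : ℝ) / (n - 2) < b)
    (hs1 : 1 ≤ s) :
    (n : ℝ) / (n - 2) < q + s :=
  stmt_3_general n hn p q r s h1 h2 a ha ha' hs1
end

section
/- Let f₁ ∈ L¹(ℝⁿ) and f₂ in weak-L^σ(ℝⁿ) for some σ ∈ (1, ∞). Then f₁ * f₂ lies in weak-L^σ(ℝⁿ) and ‖f₁ * f₂‖_{L^{σ,∞}} ≤ C ‖f₁‖_{L¹} ‖f₂‖_{L^{σ,∞}} for a constant C depending only on σ and n. -/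
open MeasureTheory
open scoped ENNReal

/-- The weak `L^σ` quasi-norm `sup_{h>0} h · μ({|f| > h})^{1/σ}`. -/
noncomputable def weakNorm {α : Type*} [MeasurableSpace α] (μ : Measure α)
    (f : α → ℝ) (σ : ℝ) : ℝ≥0∞ :=
  ⨆ h : {h : ℝ // 0 < h}, ENNReal.ofReal h.1 * μ {x | h.1 < |f x|} ^ (1 / σ)

/-!
Fix a level `h > 0` and cut `f₂` at height `M = h / (2 ‖f₁‖₁)`. The part of `f₂` bounded by `M`
convolves with `f₁` to a function bounded by `h / 2`, so `{|f₁ ⋆ f₂| > h}` lies in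
`{|f₁| ⋆ |f₂ 1_{|f₂| > M}| ≥ h / 2}`. By the layer-cake formula the tail `f₂ 1_{|f₂| > M}` is
integrable, with `‖f₂ 1_{|f₂| > M}‖₁ ≤ σ / (σ - 1) · M ^ (1 - σ) · ‖f₂‖_{σ,∞} ^ σ`; Tonelli and
Chebyshev's inequality then bound the measure of that set by
`σ / (σ - 1) · (2 ‖f₁‖₁ ‖f₂‖_{σ,∞} / h) ^ σ`.
-/

open Set

lemma lintegral_Ioi_max_rpow_neg {σ M : ℝ} (hσ : 1 < σ) (hM : 0 < M) :
    ∫⁻ t in Ioi 0, ENNReal.ofReal (max t M ^ (-σ)) =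
      ENNReal.ofReal (σ / (σ - 1) * M ^ (1 - σ)) := by
  have near : ∫⁻ t in Ioc 0 M, ENNReal.ofReal (max t M ^ (-σ)) =
      ENNReal.ofReal (M ^ (1 - σ)) := by
    rw [setLIntegral_congr_fun measurableSet_Ioc (fun t ht => by rw [max_eq_right ht.2]),
      setLIntegral_const, Real.volume_Ioc, sub_zero, ← ENNReal.ofReal_mul (by positivity),
      ← Real.rpow_add_one hM.ne']
    ring_nf
  have far : ∫⁻ t in Ioi M, ENNReal.ofReal (max t M ^ (-σ)) =
      ENNReal.ofReal (M ^ (1 - σ) / (σ - 1)) := by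
    rw [setLIntegral_congr_fun measurableSet_Ioi (fun t ht => by rw [max_eq_left ht.le]),
      ← ofReal_integral_eq_lintegral_ofReal
        (integrableOn_Ioi_rpow_of_lt (by linarith : -σ < -1) hM)
        (ae_restrict_of_forall_mem measurableSet_Ioi fun t ht =>
          Real.rpow_nonneg (hM.trans ht).le _),
      integral_Ioi_rpow_of_lt (by linarith) hM, neg_add_eq_sub, neg_div, ← div_neg, neg_sub]
  rw [← Ioc_union_Ioi_eq_Ioi hM.le, lintegral_union measurableSet_Ioi (Ioc_disjoint_Ioi le_rfl),
    near, far, ← ENNReal.ofReal_add (by positivity) (by positivity)]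
  have hσ' : σ - 1 ≠ 0 := by linarith
  congr 1
  field_simp
  ring

section WeakNorm

variable {α : Type*} [MeasurableSpace α] {μ : Measure α} {f : α → ℝ} {σ : ℝ}

lemma meas_lt_abs_le_weakNorm_rpow (hσ : 0 < σ) {t : ℝ} (ht : 0 < t) :
    μ {x | t < |f x|} ≤ weakNorm μ f σ ^ σ * ENNReal.ofReal t ^ (-σ) := by
  have level : ENNReal.ofReal t * μ {x | t < |f x|} ^ (1 / σ) ≤ weakNorm μ f σ :=
    le_iSup (fun h : {h : ℝ // 0 < h} => ENNReal.ofReal h.1 * μ {x | h.1 < |f x|} ^ (1 / σ))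
      ⟨t, ht⟩
  rw [mul_comm, ← ENNReal.le_div_iff_mul_le (.inl (ENNReal.ofReal_pos.2 ht).ne')
    (.inl ENNReal.ofReal_ne_top)] at level
  calc μ {x | t < |f x|} = (μ {x | t < |f x|} ^ (1 / σ)) ^ σ := by
        rw [← ENNReal.rpow_mul, one_div_mul_cancel hσ.ne', ENNReal.rpow_one]
    _ ≤ (weakNorm μ f σ / ENNReal.ofReal t) ^ σ := ENNReal.rpow_le_rpow level hσ.le
    _ = weakNorm μ f σ ^ σ * ENNReal.ofReal t ^ (-σ) := by
        rw [div_eq_mul_inv, ENNReal.mul_rpow_of_nonneg _ _ hσ.le, ENNReal.inv_rpow,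
          ENNReal.rpow_neg]

lemma setLIntegral_abs_gt_le_weakNorm_rpow (hf : Measurable f) (hσ : 1 < σ) {M : ℝ}
    (hM : 0 < M) :
    ∫⁻ x in {x | M < |f x|}, ‖f x‖ₑ ∂μ ≤
      ENNReal.ofReal (σ / (σ - 1) * M ^ (1 - σ)) * weakNorm μ f σ ^ σ := by
  have level (t : ℝ) (ht : t ∈ Ioi 0) : μ.restrict {x | M < |f x|} {x | t < |f x|} ≤
      ENNReal.ofReal (max t M ^ (-σ)) * weakNorm μ f σ ^ σ := by
    rw [Measure.restrict_apply (measurableSet_lt measurable_const hf.abs), mul_comm,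
      ← ENNReal.ofReal_rpow_of_pos (lt_max_of_lt_left ht)]
    refine (measure_mono fun x hx => ?_).trans
      (meas_lt_abs_le_weakNorm_rpow (by linarith) (lt_max_of_lt_left ht))
    exact (max_lt hx.1 hx.2 : max t M < |f x|)
  calc ∫⁻ x in {x | M < |f x|}, ‖f x‖ₑ ∂μ
      = ∫⁻ t in Ioi 0, μ.restrict {x | M < |f x|} {x | t < |f x|} := by
        simp_rw [Real.enorm_eq_ofReal_abs]
        exact lintegral_eq_lintegral_meas_lt _ (.of_forall fun x => abs_nonneg _)
          hf.abs.aemeasurable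
    _ ≤ ∫⁻ t in Ioi 0, ENNReal.ofReal (max t M ^ (-σ)) * weakNorm μ f σ ^ σ :=
        setLIntegral_mono' measurableSet_Ioi level
    _ = ENNReal.ofReal (σ / (σ - 1) * M ^ (1 - σ)) * weakNorm μ f σ ^ σ := by
        rw [lintegral_mul_const _ (by fun_prop), lintegral_Ioi_max_rpow_neg hσ hM]

end WeakNorm

section Convolution

variable {G : Type*} [AddCommGroup G] [MeasurableSpace G] [MeasurableAdd₂ G] [MeasurableNeg G]
  {μ : Measure G} [μ.IsAddLeftInvariant]

lemma lintegral_lconvolution [SFinite μ] {f g : G → ℝ≥0∞} (hf : AEMeasurable f μ)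
    (hg : AEMeasurable g μ) :
    ∫⁻ x, (f ⋆ₗ[μ] g) x ∂μ = (∫⁻ x, f x ∂μ) * ∫⁻ x, g x ∂μ := by
  simp only [lconvolution_def]
  rw [lintegral_lintegral_swap (by fun_prop)]
  calc ∫⁻ y, ∫⁻ x, f y * g (-y + x) ∂μ ∂μ = ∫⁻ y, f y * ∫⁻ x, g x ∂μ ∂μ := by
        congr with y
        rw [lintegral_const_mul'' _ (by fun_prop), lintegral_add_left_eq_self]
    _ = (∫⁻ x, f x ∂μ) * ∫⁻ x, g x ∂μ := lintegral_mul_const'' _ hf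

variable [μ.IsNegInvariant] {f₁ f₂ : G → ℝ}

lemma enorm_integral_sub_mul_le (hf₁ : AEMeasurable f₁ μ) (M : ℝ) (x : G) :
    ‖∫ y, f₁ (x - y) * f₂ y ∂μ‖ₑ ≤ ENNReal.ofReal M * ∫⁻ y, ‖f₁ y‖ₑ ∂μ +
      ((fun y => ‖{y | M < |f₂ y|}.indicator f₂ y‖ₑ) ⋆ₗ[μ] fun y => ‖f₁ y‖ₑ) x := by
  have hf₁x : AEMeasurable (fun y => ‖f₁ (x - y)‖ₑ) μ :=
    hf₁.enorm.comp_quasiMeasurePreserving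
      (Measure.measurePreserving_sub_left μ x).quasiMeasurePreserving
  have split (y : G) : ‖f₂ y‖ₑ ≤ ENNReal.ofReal M + ‖{y | M < |f₂ y|}.indicator f₂ y‖ₑ := by
    by_cases hy : M < |f₂ y|
    · rw [indicator_of_mem (show y ∈ {y | M < |f₂ y|} from hy)]
      exact le_add_self
    · rw [Real.enorm_eq_ofReal_abs]
      exact le_add_right (ENNReal.ofReal_le_ofReal (not_lt.1 hy))
  calc ‖∫ y, f₁ (x - y) * f₂ y ∂μ‖ₑ ≤ ∫⁻ y, ‖f₁ (x - y)‖ₑ * ‖f₂ y‖ₑ ∂μ := by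
        simpa only [enorm_mul] using
          enorm_integral_le_lintegral_enorm (fun y => f₁ (x - y) * f₂ y)
    _ ≤ ∫⁻ y, ‖f₁ (x - y)‖ₑ * ENNReal.ofReal M +
          ‖{y | M < |f₂ y|}.indicator f₂ y‖ₑ * ‖f₁ (x - y)‖ₑ ∂μ := by
        gcongr with y
        rw [mul_comm _ ‖f₁ _‖ₑ, ← mul_add]
        gcongr
        exact split y
    _ = ENNReal.ofReal M * ∫⁻ y, ‖f₁ y‖ₑ ∂μ +
          ((fun y => ‖{y | M < |f₂ y|}.indicator f₂ y‖ₑ) ⋆ₗ[μ] fun y => ‖f₁ y‖ₑ) x := by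
        rw [lintegral_add_left' (hf₁x.mul_const _), lintegral_mul_const'' _ hf₁x,
          lintegral_sub_left_eq_self (fun y => ‖f₁ y‖ₑ), mul_comm, lconvolution_def]
        simp only [neg_add_eq_sub]

lemma meas_lt_abs_integral_sub_mul_le [SFinite μ] (hf₁ : Integrable f₁ μ)
    (hf₂ : Measurable f₂) {h M : ℝ} (hh : 0 < h) (hMI : M * ∫ y, |f₁ y| ∂μ ≤ h / 2) :
    μ {x | h < |∫ y, f₁ (x - y) * f₂ y ∂μ|} ≤ ENNReal.ofReal (2 / h) *
      ENNReal.ofReal (∫ y, |f₁ y| ∂μ) * ∫⁻ y in {y | M < |f₂ y|}, ‖f₂ y‖ₑ ∂μ := by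
  set F := (fun y => ‖{y | M < |f₂ y|}.indicator f₂ y‖ₑ) ⋆ₗ[μ] fun y => ‖f₁ y‖ₑ
  have hI : ENNReal.ofReal (∫ y, |f₁ y| ∂μ) = ∫⁻ y, ‖f₁ y‖ₑ ∂μ := by
    simpa only [Real.norm_eq_abs] using ofReal_integral_norm_eq_lintegral_enorm hf₁
  have hMI' : ENNReal.ofReal M * ∫⁻ y, ‖f₁ y‖ₑ ∂μ ≤ ENNReal.ofReal (h / 2) := by
    rw [← hI, ← ENNReal.ofReal_mul' (integral_nonneg fun y => abs_nonneg _)]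
    exact ENNReal.ofReal_le_ofReal hMI
  have hsub : {x | h < |∫ y, f₁ (x - y) * f₂ y ∂μ|} ⊆ {x | ENNReal.ofReal (h / 2) ≤ F x} := by
    intro x hx
    have halves : ENNReal.ofReal (h / 2) + ENNReal.ofReal (h / 2) ≤
        ENNReal.ofReal (h / 2) + F x :=
      calc ENNReal.ofReal (h / 2) + ENNReal.ofReal (h / 2) = ENNReal.ofReal h := by
            rw [← ENNReal.ofReal_add (by positivity) (by positivity), add_halves]
        _ ≤ ‖∫ y, f₁ (x - y) * f₂ y ∂μ‖ₑ := by
            rw [Real.enorm_eq_ofReal_abs]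
            exact ENNReal.ofReal_le_ofReal hx.le
        _ ≤ ENNReal.ofReal M * ∫⁻ y, ‖f₁ y‖ₑ ∂μ + F x :=
            enorm_integral_sub_mul_le hf₁.aemeasurable M x
        _ ≤ ENNReal.ofReal (h / 2) + F x := add_le_add_left hMI' _
    exact (ENNReal.add_le_add_iff_left ENNReal.ofReal_ne_top).1 halves
  have hS : MeasurableSet {y | M < |f₂ y|} := measurableSet_lt measurable_const hf₂.abs
  have htail : AEMeasurable (fun y => ‖{y | M < |f₂ y|}.indicator f₂ y‖ₑ) μ :=
    (hf₂.indicator hS).enorm.aemeasurable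
  have hF : AEMeasurable F μ := aemeasurable_lconvolution htail hf₁.aemeasurable.enorm
  calc μ {x | h < |∫ y, f₁ (x - y) * f₂ y ∂μ|} ≤ (∫⁻ x, F x ∂μ) / ENNReal.ofReal (h / 2) :=
        (measure_mono hsub).trans (meas_ge_le_lintegral_div hF
          (ENNReal.ofReal_pos.2 (by positivity)).ne' ENNReal.ofReal_ne_top)
    _ = ENNReal.ofReal (2 / h) * ENNReal.ofReal (∫ y, |f₁ y| ∂μ) *
          ∫⁻ y in {y | M < |f₂ y|}, ‖f₂ y‖ₑ ∂μ := by
        simp_rw [F, lintegral_lconvolution htail hf₁.aemeasurable.enorm,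
          enorm_indicator_eq_indicator_enorm, lintegral_indicator hS]
        rw [hI, ENNReal.div_eq_inv_mul, ← ENNReal.ofReal_inv_of_pos (by positivity), inv_div,
          mul_comm (∫⁻ _ in _, _ ∂_), mul_assoc]

lemma meas_lt_abs_integral_sub_mul_le_rpow [SFinite μ] {σ : ℝ} (hσ : 1 < σ)
    (hf₁ : Integrable f₁ μ) (hf₂ : Measurable f₂) {h : ℝ} (hh : 0 < h) :
    μ {x | h < |∫ y, f₁ (x - y) * f₂ y ∂μ|} ≤ (ENNReal.ofReal
      (2 * (σ / (σ - 1)) ^ (1 / σ) * (∫ y, |f₁ y| ∂μ) / h) * weakNorm μ f₂ σ) ^ σ := by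
  have hσ0 : 0 < σ := by linarith
  set I := ∫ y, |f₁ y| ∂μ
  set c := (σ / (σ - 1)) ^ (1 / σ)
  rcases (integral_nonneg fun y => abs_nonneg (f₁ y) : 0 ≤ I).eq_or_lt with hI | hI
  · refine (meas_lt_abs_integral_sub_mul_le (M := 0) hf₁ hf₂ hh ?_).trans ?_
    · rw [zero_mul]
      positivity
    · simp [← hI]
  have hI' : I ≠ 0 := hI.ne'
  set M := h / (2 * I) with hM_def
  have hM : 0 < M := by positivity
  have hMI : M * I = h / 2 := by
    rw [hM_def]
    field_simp
  have hexp : 2 / h * I * (σ / (σ - 1) * M ^ (1 - σ)) = (2 * c * I / h) ^ σ := by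
    rw [show 2 * c * I / h = c / M by rw [hM_def]; field_simp,
      Real.div_rpow (by positivity) hM.le, ← Real.rpow_mul (by positivity),
      one_div_mul_cancel hσ0.ne', Real.rpow_one, Real.rpow_sub hM, Real.rpow_one,
      show h = 2 * (M * I) by rw [hMI]; ring]
    field_simp
  calc μ {x | h < |∫ y, f₁ (x - y) * f₂ y ∂μ|}
      ≤ ENNReal.ofReal (2 / h) * ENNReal.ofReal I *
          (ENNReal.ofReal (σ / (σ - 1) * M ^ (1 - σ)) * weakNorm μ f₂ σ ^ σ) :=
        (meas_lt_abs_integral_sub_mul_le hf₁ hf₂ hh hMI.le).trans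
          (by gcongr; exact setLIntegral_abs_gt_le_weakNorm_rpow hf₂ hσ hM)
    _ = (ENNReal.ofReal (2 * c * I / h) * weakNorm μ f₂ σ) ^ σ := by
      rw [← mul_assoc, ← ENNReal.ofReal_mul (by positivity),
        ← ENNReal.ofReal_mul (by positivity), hexp, ENNReal.mul_rpow_of_nonneg _ _ hσ0.le,
        ENNReal.ofReal_rpow_of_pos (by positivity)]

lemma weakNorm_integral_sub_mul_le [SFinite μ] {σ : ℝ} (hσ : 1 < σ) (hf₁ : Integrable f₁ μ)
    (hf₂ : Measurable f₂) :
    weakNorm μ (fun x => ∫ y, f₁ (x - y) * f₂ y ∂μ) σ ≤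
      ENNReal.ofReal (2 * (σ / (σ - 1)) ^ (1 / σ) * ∫ y, |f₁ y| ∂μ) * weakNorm μ f₂ σ := by
  refine iSup_le fun ⟨h, hh⟩ => ?_
  calc ENNReal.ofReal h * μ {x | h < |∫ y, f₁ (x - y) * f₂ y ∂μ|} ^ (1 / σ)
      ≤ ENNReal.ofReal h * (ENNReal.ofReal
          (2 * (σ / (σ - 1)) ^ (1 / σ) * (∫ y, |f₁ y| ∂μ) / h) * weakNorm μ f₂ σ) := by
        gcongr
        have level := (ENNReal.rpow_inv_le_iff (by linarith)).2
          (meas_lt_abs_integral_sub_mul_le_rpow hσ hf₁ hf₂ hh)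
        rwa [← one_div] at level
    _ = ENNReal.ofReal (2 * (σ / (σ - 1)) ^ (1 / σ) * ∫ y, |f₁ y| ∂μ) * weakNorm μ f₂ σ := by
        rw [← mul_assoc, ← ENNReal.ofReal_mul hh.le, mul_div_cancel₀ _ hh.ne']

end Convolution

theorem stmt_6 (n : ℕ) (σ : ℝ) (hσ : 1 < σ) :
    ∃ C : ℝ, 0 < C ∧ ∀ f₁ f₂ : EuclideanSpace ℝ (Fin n) → ℝ,
      Integrable f₁ volume → Measurable f₂ → weakNorm volume f₂ σ < ⊤ →
      weakNorm volume (fun x => ∫ y, f₁ (x - y) * f₂ y) σ < ⊤ ∧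
      weakNorm volume (fun x => ∫ y, f₁ (x - y) * f₂ y) σ ≤
        ENNReal.ofReal (C * ∫ y, |f₁ y|) * weakNorm volume f₂ σ := by
  refine ⟨2 * (σ / (σ - 1)) ^ (1 / σ),
    mul_pos two_pos (Real.rpow_pos_of_pos (div_pos (by linarith) (by linarith)) _),
    fun f₁ f₂ hf₁ hf₂ hf₂σ => ?_⟩
  have hbound := weakNorm_integral_sub_mul_le hσ hf₁ hf₂
  exact ⟨hbound.trans_lt (ENNReal.mul_lt_top ENNReal.ofReal_lt_top hf₂σ), hbound⟩
end

section
/- Let n ≥ 3 and suppose the comparison inequality hypotheses of the system hold with p ≥ s and u ≥ 0 on ℝⁿ. If (u,v) is a finite energy solution (so that in particular v satisfies the decay bound |v(x)| ≤ K(1+|x|^n)^{-1/b}), then for all x ∈ ℝⁿ, |v(x)|^{p-s+1}/(p-s+1) ≤ u(x)^{q-r+1}/(q-r+1). -/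
open MeasureTheory

/-- The Laplacian of a function on Euclidean space, as the sum of the pure second
derivatives in the coordinate directions. -/
noncomputable def lap {n : ℕ} (u : EuclideanSpace ℝ (Fin n) → ℝ)
    (x : EuclideanSpace ℝ (Fin n)) : ℝ :=
  ∑ i, iteratedFDeriv ℝ 2 u x ![EuclideanSpace.single i 1, EuclideanSpace.single i 1]

/-!
Put `α = p - s + 1`, `β = q - r + 1`, `σ = β / α ≤ 1` and choose `k > 0` with `σ k^α = 1`; the claim
is `|v| ≤ k u^σ`. Since `-Δu ≥ 0`, the strong minimum principle (through Hopf's barrier) gives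
either `u ≡ 0`, and then `v` is harmonic, or `u > 0`. At a point where `W = |v| - k u^σ` is
positive, `W` is touched from below by `±v - k u^σ`, which is subharmonic there: the system gives
`Δ(±v) = -u^q |v|^s`, while the concavity of `t ↦ t^σ` and `|v| ≥ k u^σ` give
`-Δ(k u^σ) ≥ k σ u^(σ-1) |v|^p u^r ≥ u^q |v|^s`. Since `W` is small at infinity by the decay of `v`,
the maximum principle, applied to `W - ε (1 + ‖x‖²)^(-1/2)` (strictly superharmonic when
`n ≥ 3`), yields `W ≤ 0`.
-/

open Filter Topology InnerProductSpace Laplacian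

section OneVariable

variable {f g φ : ℝ → ℝ} {t₀ : ℝ}

theorem deriv_deriv_nonpos_of_isLocalMax (hmax : IsLocalMax f t₀) (hf : ContinuousAt f t₀) :
    deriv (deriv f) t₀ ≤ 0 := by
  by_contra! hpos
  have hmin := isLocalMin_of_deriv_deriv_pos hpos hmax.deriv_eq_zero hf
  have hconst : f =ᶠ[𝓝 t₀] fun _ => f t₀ :=
    (hmin.and hmax).mono fun t ht => le_antisymm ht.2 ht.1
  have hderiv : deriv f =ᶠ[𝓝 t₀] fun _ => 0 :=
    hconst.eventuallyEq_nhds.mono fun t ht => by rw [ht.deriv_eq, deriv_const]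
  simp [hderiv.deriv_eq] at hpos

theorem ContDiffAt.differentiableAt_deriv (hf : ContDiffAt ℝ 2 f t₀) :
    DifferentiableAt ℝ (deriv f) t₀ :=
  (hf.derivWithin (m := 1) (by norm_num)).differentiableAt one_ne_zero

theorem deriv_deriv_comp (hg : ContDiffAt ℝ 2 g t₀) (hφ : ContDiffAt ℝ 2 φ (g t₀)) :
    deriv (deriv fun t => φ (g t)) t₀ =
      deriv (deriv φ) (g t₀) * deriv g t₀ ^ 2 + deriv φ (g t₀) * deriv (deriv g) t₀ := by
  have hφ' : ∀ᶠ t in 𝓝 t₀, DifferentiableAt ℝ φ (g t) :=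
    hg.continuousAt.eventually ((hφ.eventually (by simp)).mono fun _ h =>
      h.differentiableAt two_ne_zero)
  have hg' : ∀ᶠ t in 𝓝 t₀, DifferentiableAt ℝ g t :=
    (hg.eventually (by simp)).mono fun _ h => h.differentiableAt two_ne_zero
  have hchain : deriv (fun t => φ (g t)) =ᶠ[𝓝 t₀] fun t => deriv φ (g t) * deriv g t := by
    filter_upwards [hφ', hg'] with t h1 h2
    exact deriv_comp t h1 h2
  rw [hchain.deriv_eq]
  have hprod : HasDerivAt (fun t => deriv φ (g t) * deriv g t)
      (deriv (deriv φ) (g t₀) * deriv g t₀ * deriv g t₀ + deriv φ (g t₀) * deriv (deriv g) t₀)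
      t₀ :=
    (hφ.differentiableAt_deriv.hasDerivAt.comp t₀
      (hg.differentiableAt two_ne_zero).hasDerivAt).mul hg.differentiableAt_deriv.hasDerivAt
  rw [hprod.deriv]
  ring

theorem deriv_deriv_comp_const_add (φ : ℝ → ℝ) (a ρ : ℝ) :
    deriv (deriv fun s => φ (a + s)) ρ = deriv (deriv φ) (a + ρ) := by
  rw [show deriv (fun s => φ (a + s)) = fun s => deriv φ (a + s) from
    funext fun s => deriv_comp_const_add φ a s, deriv_comp_const_add]

theorem hasDerivAt_quadratic (A B C t : ℝ) :
    HasDerivAt (fun s : ℝ => A + B * s + C * s ^ 2) (B + 2 * C * t) t := by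
  have hlin : HasDerivAt (fun s : ℝ => B * s) B t := by
    simpa using (hasDerivAt_id t).const_mul B
  have hsq : HasDerivAt (fun s : ℝ => C * s ^ 2) (C * (2 * t)) t := by
    simpa using (hasDerivAt_pow 2 t).const_mul C
  exact ((hlin.const_add A).fun_add hsq).congr_deriv (by ring)

theorem deriv_deriv_quadratic (A B C : ℝ) :
    deriv (deriv fun s : ℝ => A + B * s + C * s ^ 2) 0 = 2 * C := by
  have h : deriv (fun s : ℝ => A + B * s + C * s ^ 2) = fun t => B + 2 * C * t :=
    funext fun t => (hasDerivAt_quadratic A B C t).deriv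
  simp [h]

theorem deriv_deriv_rpow_const (c ρ : ℝ) :
    deriv (deriv fun s => s ^ c) ρ = c * (c - 1) * ρ ^ (c - 2) := by
  simp only [Real.deriv_rpow_const', deriv_const_mul_field']
  ring_nf

theorem hasDerivAt_exp_neg_mul_sub (κ C ρ : ℝ) :
    HasDerivAt (fun s => Real.exp (-κ * s) - C) (-κ * Real.exp (-κ * ρ)) ρ :=
  ((((hasDerivAt_id ρ).const_mul (-κ)).exp).sub_const C).congr_deriv (by simp [mul_comm])

theorem deriv_deriv_exp_neg_mul_sub (κ C ρ : ℝ) :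
    deriv (deriv fun s => Real.exp (-κ * s) - C) ρ = κ ^ 2 * Real.exp (-κ * ρ) := by
  have hderiv : deriv (fun s => Real.exp (-κ * s) - C) = fun s => -κ * Real.exp (-κ * s) :=
    funext fun s => (hasDerivAt_exp_neg_mul_sub κ C s).deriv
  rw [hderiv]
  simpa [sq, mul_assoc] using ((hasDerivAt_exp_neg_mul_sub κ 0 ρ).const_mul (-κ)).deriv

theorem HasDerivAt.nonneg_of_nonneg_right {g : ℝ → ℝ} {g' δ : ℝ} (hg : HasDerivAt g g' 0)
    (hg0 : g 0 = 0) (hδ : 0 < δ) (hpos : ∀ t ∈ Set.Ioo 0 δ, 0 ≤ g t) : 0 ≤ g' :=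
  ge_of_tendsto hg.tendsto_slope_zero_right <| by
    filter_upwards [Ioo_mem_nhdsGT hδ] with t ht
    simpa [hg0] using mul_nonneg (inv_nonneg.mpr ht.1.le) (hpos t ht)

end OneVariable

section RealInequalities

theorem exists_mul_le_abs_mul_eq_abs (a : ℝ) : ∃ e : ℝ, (∀ b, e * b ≤ |b|) ∧ e * a = |a| := by
  rcases le_total 0 a with h | h
  · exact ⟨1, fun b => by simpa using le_abs_self b, by rw [one_mul, abs_of_nonneg h]⟩
  · exact ⟨-1, fun b => by simpa using neg_le_abs b, by rw [abs_of_nonpos h]; ring⟩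

theorem exists_pos_mul_rpow_eq_one {σ α : ℝ} (hσ : 0 < σ) (hα : α ≠ 0) :
    ∃ k > 0, σ * k ^ α = 1 :=
  ⟨σ⁻¹ ^ α⁻¹, by positivity, by
    rw [← Real.rpow_mul (by positivity), inv_mul_cancel₀ hα, Real.rpow_one,
      mul_inv_cancel₀ hσ.ne']⟩

theorem rpow_mul_rpow_le_of_mul_rpow_le {p q r s U V k σ : ℝ} (hU : 0 < U) (hk : 0 < k)
    (hσ : 0 < σ) (hps : s ≤ p) (hkσ : σ * k ^ (p - s + 1) = 1)
    (hσq : σ * (p - s + 1) = q - r + 1) (hV : k * U ^ σ ≤ V) :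
    U ^ q * V ^ s ≤ k * σ * U ^ (σ - 1) * V ^ p * U ^ r := by
  have hV0 : 0 < V := (by positivity : 0 < k * U ^ σ).trans_le hV
  calc U ^ q * V ^ s
      = σ * (k * k ^ (p - s)) * (U ^ (σ - 1) * U ^ (σ * (p - s)) * U ^ r) * V ^ s := by
        rw [← Real.rpow_add hU, ← Real.rpow_add hU, ← Real.rpow_one_add' hk.le (by linarith),
          show 1 + (p - s) = p - s + 1 by ring, hkσ, one_mul]
        congr 2
        linarith
    _ = k * σ * U ^ (σ - 1) * (k * U ^ σ) ^ (p - s) * V ^ s * U ^ r := by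
        rw [Real.mul_rpow hk.le (by positivity), ← Real.rpow_mul hU.le]
        ring
    _ ≤ k * σ * U ^ (σ - 1) * V ^ (p - s) * V ^ s * U ^ r := by
        gcongr
    _ = k * σ * U ^ (σ - 1) * V ^ p * U ^ r := by
        rw [mul_assoc _ (V ^ (p - s)), ← Real.rpow_add hV0, sub_add_cancel]

theorem rpow_div_le_rpow_div_of_abs_le_mul_rpow {U V k σ α β : ℝ} (hU : 0 ≤ U) (hk : 0 < k)
    (hα : 0 < α) (hβ : 0 < β) (hkσ : σ * k ^ α = 1) (hσα : σ * α = β) (h : |V| ≤ k * U ^ σ) :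
    |V| ^ α / α ≤ U ^ β / β := by
  have hpow : |V| ^ α ≤ k ^ α * U ^ β := by
    calc |V| ^ α ≤ (k * U ^ σ) ^ α := Real.rpow_le_rpow (abs_nonneg V) h hα.le
      _ = k ^ α * U ^ β := by
        rw [Real.mul_rpow hk.le (by positivity), ← Real.rpow_mul hU, hσα]
  rw [div_le_div_iff₀ hα hβ]
  calc |V| ^ α * β ≤ k ^ α * U ^ β * β := by gcongr
    _ = U ^ β * α := by linear_combination (U ^ β * α) * hkσ - k ^ α * U ^ β * hσα

end RealInequalities

section AlongLines

variable {E : Type*} [NormedAddCommGroup E] [NormedSpace ℝ E] {f : E → ℝ} {x : E}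

theorem ContDiffAt.comp_add_smul {k : WithTop ℕ∞} (hf : ContDiffAt ℝ k f x) (y : E) :
    ContDiffAt ℝ k (fun t : ℝ => f (x + t • y)) 0 :=
  (show ContDiffAt ℝ k f (x + (0 : ℝ) • y) by simpa using hf).comp 0 (by fun_prop)

theorem IsLocalMax.comp_add_smul (hmax : IsLocalMax f x) (y : E) :
    IsLocalMax (fun t : ℝ => f (x + t • y)) 0 :=
  IsLocalMax.comp_continuous (g := fun t : ℝ => x + t • y) (by simpa using hmax) (by fun_prop)

theorem ContDiffAt.iteratedFDeriv_two_eq_deriv_deriv (hf : ContDiffAt ℝ 2 f x) (y : E) :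
    iteratedFDeriv ℝ 2 f x ![y, y] = deriv (deriv fun t : ℝ => f (x + t • y)) 0 := by
  have hline : Tendsto (fun t : ℝ => x + t • y) (𝓝 0) (𝓝 x) := by
    simpa using (Continuous.tendsto (by fun_prop : Continuous fun t : ℝ => x + t • y) 0)
  have h1 : deriv (fun t : ℝ => f (x + t • y)) =ᶠ[𝓝 0]
      fun t => iteratedFDeriv ℝ 1 f (x + t • y) (fun _ => y) := by
    filter_upwards [hline.eventually (hf.eventually (by simp))] with t ht
    simpa using (ht.of_le (by norm_num : ((0 + 1 : ℕ) : WithTop ℕ∞) ≤ 2)).deriv_fderiv_add_smul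
  have h2 : ![y, y] = fun _ => y := by ext i; fin_cases i <;> rfl
  rw [h1.deriv_eq, h2]
  symm
  simpa using (show ContDiffAt ℝ ((1 + 1 : ℕ)) f (x + (0 : ℝ) • y) by simpa using hf)
    |>.deriv_fderiv_add_smul

end AlongLines

section HopfBarrier

variable {E : Type*} [NormedAddCommGroup E] {c : E} {κ R : ℝ}

noncomputable def hopfBarrier (c : E) (κ R : ℝ) (y : E) : ℝ :=
  Real.exp (-κ * ‖y - c‖ ^ 2) - Real.exp (-κ * R ^ 2)

theorem hopfBarrier_le_one (hκ : 0 ≤ κ) (y : E) : hopfBarrier c κ R y ≤ 1 := by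
  have : Real.exp (-κ * ‖y - c‖ ^ 2) ≤ 1 :=
    Real.exp_le_one_iff.mpr (by nlinarith [norm_nonneg (y - c)])
  unfold hopfBarrier
  linarith [Real.exp_pos (-κ * R ^ 2)]

theorem hopfBarrier_eq_zero {y : E} (hy : ‖y - c‖ = R) : hopfBarrier c κ R y = 0 := by
  simp [hopfBarrier, hy]

end HopfBarrier

section SquaredDistance

variable {E : Type*} [NormedAddCommGroup E] [InnerProductSpace ℝ E] {c : E} {κ R : ℝ}

theorem norm_add_smul_sub_sq (x y z : E) (t : ℝ) :
    ‖x + t • y - z‖ ^ 2 = ‖x - z‖ ^ 2 + 2 * ⟪x - z, y⟫_ℝ * t + ‖y‖ ^ 2 * t ^ 2 := by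
  rw [show x + t • y - z = (x - z) + t • y by abel, norm_add_sq_real, inner_smul_right,
    norm_smul, mul_pow, Real.norm_eq_abs, sq_abs]
  ring

theorem contDiff_norm_sub_sq {k : WithTop ℕ∞} (z : E) : ContDiff ℝ k fun w => ‖w - z‖ ^ 2 :=
  (contDiff_id.sub contDiff_const).norm_sq ℝ

theorem lineDeriv_norm_sub_sq (z x y : E) :
    lineDeriv ℝ (fun w => ‖w - z‖ ^ 2) x y = 2 * ⟪x - z, y⟫_ℝ := by
  simp only [lineDeriv, norm_add_smul_sub_sq]
  simpa using (hasDerivAt_quadratic (‖x - z‖ ^ 2) (2 * ⟪x - z, y⟫_ℝ) (‖y‖ ^ 2) 0).deriv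

theorem contDiff_hopfBarrier : ContDiff ℝ 2 (hopfBarrier c κ R) :=
  (Real.contDiff_exp.comp (contDiff_const.mul (contDiff_norm_sub_sq c))).sub contDiff_const

theorem hasDerivAt_hopfBarrier_segment {y₀ : E} (hy₀ : ‖y₀ - c‖ = R) :
    HasDerivAt (fun t : ℝ => hopfBarrier c κ R (y₀ + t • (c - y₀)))
      (2 * κ * R ^ 2 * Real.exp (-κ * R ^ 2)) 0 := by
  have hfun : (fun t : ℝ => hopfBarrier c κ R (y₀ + t • (c - y₀))) = fun t =>
      (fun s => Real.exp (-κ * s) - Real.exp (-κ * R ^ 2))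
        (R ^ 2 + (-2 * R ^ 2) * t + R ^ 2 * t ^ 2) := by
    ext t
    rw [hopfBarrier, norm_add_smul_sub_sq, norm_sub_rev c, ← neg_sub y₀ c, inner_neg_right,
      real_inner_self_eq_norm_sq, hy₀]
    ring_nf
  rw [hfun]
  exact ((hasDerivAt_exp_neg_mul_sub κ _ _).comp 0
    (hasDerivAt_quadratic (R ^ 2) (-2 * R ^ 2) (R ^ 2) 0)).congr_deriv (by simp; ring)

theorem nonpos_of_mul_hopfBarrier_le {u : E → ℝ} {m : ℝ} {y₀ : E}
    (hu : DifferentiableAt ℝ u y₀) (h0 : ∀ y, 0 ≤ u y) (hy₀ : u y₀ = 0) (hy₀R : ‖y₀ - c‖ = R)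
    (hR : 0 < R) (hκ : 0 < κ)
    (hcomp : ∀ y, R / 2 ≤ ‖y - c‖ → ‖y - c‖ ≤ R → m * hopfBarrier c κ R y ≤ u y) : m ≤ 0 := by
  set w := c - y₀
  have hline : HasDerivAt (fun t : ℝ => u (y₀ + t • w)) 0 0 := by
    have hd : DifferentiableAt ℝ (fun t : ℝ => u (y₀ + t • w)) 0 :=
      (show DifferentiableAt ℝ u (y₀ + (0 : ℝ) • w) by simpa using hu).comp (0 : ℝ) (by fun_prop)
    have hmin : IsLocalMin (fun t : ℝ => u (y₀ + t • w)) 0 :=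
      Eventually.of_forall fun t => by simpa [hy₀] using h0 _
    simpa [hmin.deriv_eq_zero] using hd.hasDerivAt
  have hsegment (t : ℝ) (ht : t ∈ Set.Ioo (0 : ℝ) (1 / 2)) :
      R / 2 ≤ ‖y₀ + t • w - c‖ ∧ ‖y₀ + t • w - c‖ ≤ R := by
    rw [show y₀ + t • w - c = (1 - t) • (y₀ - c) by simp only [w]; module, norm_smul,
      Real.norm_eq_abs, hy₀R, abs_of_pos (by linarith [ht.2])]
    constructor <;> nlinarith [ht.1, ht.2]
  have hderiv := (hline.sub ((hasDerivAt_hopfBarrier_segment (κ := κ) hy₀R).const_mul m))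
    |>.nonneg_of_nonneg_right (by simp [hy₀, hopfBarrier_eq_zero hy₀R])
      (by norm_num : (0 : ℝ) < 1 / 2)
      fun t ht => sub_nonneg.mpr (hcomp _ (hsegment t ht).1 (hsegment t ht).2)
  have hslope : 0 < 2 * κ * R ^ 2 * Real.exp (-κ * R ^ 2) := by positivity
  nlinarith

end SquaredDistance

section Laplacian

variable {E : Type*} [NormedAddCommGroup E] [InnerProductSpace ℝ E] [FiniteDimensional ℝ E]
  {f : E → ℝ} {x c : E} {κ R : ℝ}

theorem laplacian_eq_sum_deriv_deriv {ι : Type*} [Fintype ι] (v : OrthonormalBasis ι ℝ E)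
    (hf : ContDiffAt ℝ 2 f x) : Δ f x = ∑ i, deriv (deriv fun t : ℝ => f (x + t • v i)) 0 := by
  rw [laplacian_eq_iteratedFDeriv_orthonormalBasis f v]
  exact Finset.sum_congr rfl fun i _ => hf.iteratedFDeriv_two_eq_deriv_deriv (v i)

theorem laplacian_nonpos_of_isLocalMax (hf : ContDiffAt ℝ 2 f x) (hmax : IsLocalMax f x) :
    Δ f x ≤ 0 := by
  rw [laplacian_eq_sum_deriv_deriv (stdOrthonormalBasis ℝ E) hf]
  exact Finset.sum_nonpos fun i _ => deriv_deriv_nonpos_of_isLocalMax (hmax.comp_add_smul _)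
    (hf.comp_add_smul _).continuousAt

theorem laplacian_comp {φ : ℝ → ℝ} {ι : Type*} [Fintype ι] (v : OrthonormalBasis ι ℝ E)
    (hf : ContDiffAt ℝ 2 f x) (hφ : ContDiffAt ℝ 2 φ (f x)) :
    Δ (fun y => φ (f y)) x =
      deriv (deriv φ) (f x) * ∑ i, lineDeriv ℝ f x (v i) ^ 2 + deriv φ (f x) * Δ f x := by
  rw [laplacian_eq_sum_deriv_deriv (f := fun y => φ (f y)) v (hφ.comp x hf),
    laplacian_eq_sum_deriv_deriv v hf, Finset.mul_sum, Finset.mul_sum, ← Finset.sum_add_distrib]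
  refine Finset.sum_congr rfl fun i _ => ?_
  simpa [lineDeriv] using deriv_deriv_comp (hf.comp_add_smul (v i)) (by simpa using hφ)

theorem laplacian_norm_sub_sq (z x : E) :
    Δ (fun w => ‖w - z‖ ^ 2) x = 2 * Module.finrank ℝ E := by
  set v := stdOrthonormalBasis ℝ E
  rw [laplacian_eq_sum_deriv_deriv v (contDiff_norm_sub_sq z).contDiffAt]
  simp only [norm_add_smul_sub_sq, deriv_deriv_quadratic, v.orthonormal.1, Finset.sum_const,
    Finset.card_univ, ← Module.finrank_eq_card_basis v.toBasis]
  simp; ring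

theorem laplacian_comp_norm_sub_sq {φ : ℝ → ℝ} (z x : E)
    (hφ : ContDiffAt ℝ 2 φ (‖x - z‖ ^ 2)) :
    Δ (fun y => φ (‖y - z‖ ^ 2)) x =
      4 * ‖x - z‖ ^ 2 * deriv (deriv φ) (‖x - z‖ ^ 2)
        + 2 * Module.finrank ℝ E * deriv φ (‖x - z‖ ^ 2) := by
  rw [laplacian_comp (stdOrthonormalBasis ℝ E) (contDiff_norm_sub_sq z).contDiffAt hφ,
    laplacian_norm_sub_sq]
  simp only [lineDeriv_norm_sub_sq, mul_pow, ← Finset.mul_sum,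
    (stdOrthonormalBasis ℝ E).sum_sq_inner_left]
  ring

theorem laplacian_hopfBarrier_pos (hκ : 0 < κ) {y : E}
    (hy : Module.finrank ℝ E < 2 * κ * ‖y - c‖ ^ 2) : 0 < Δ (hopfBarrier c κ R) y := by
  have hφ : ContDiffAt ℝ 2 (fun s => Real.exp (-κ * s) - Real.exp (-κ * R ^ 2)) (‖y - c‖ ^ 2) :=
    (Real.contDiff_exp.comp (contDiff_const.mul contDiff_id)).sub contDiff_const |>.contDiffAt
  rw [show hopfBarrier c κ R = fun y => (fun s => Real.exp (-κ * s) - Real.exp (-κ * R ^ 2))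
      (‖y - c‖ ^ 2) from rfl, laplacian_comp_norm_sub_sq c y hφ, deriv_deriv_exp_neg_mul_sub,
    (hasDerivAt_exp_neg_mul_sub _ _ _).deriv]
  have he := Real.exp_pos (-κ * ‖y - c‖ ^ 2)
  nlinarith [mul_pos (mul_pos hκ he) (sub_pos.mpr hy)]

/-- With `ρ = ‖y‖²`, the witness `(1 + ρ)^(-1/2)` has Laplacian
`(1 + ρ)^(-5/2) (3ρ - (dim E) (1 + ρ))`. -/
theorem exists_pos_le_one_laplacian_neg (hE : 3 ≤ Module.finrank ℝ E) :
    ∃ ψ : E → ℝ, ContDiff ℝ 2 ψ ∧ (∀ y, 0 < ψ y ∧ ψ y ≤ 1) ∧ ∀ y, Δ ψ y < 0 := by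
  refine ⟨fun y => (1 + ‖y - 0‖ ^ 2) ^ (-(1 / 2) : ℝ),
    (contDiff_const.add (contDiff_norm_sub_sq 0)).rpow_const_of_ne fun y => by positivity,
    fun y => ⟨by positivity, Real.rpow_le_one_of_one_le_of_nonpos (by simp)
      (by norm_num)⟩, fun y => ?_⟩
  set ρ := ‖y - 0‖ ^ 2 with hρ
  have hρ0 : 0 ≤ ρ := by positivity
  rw [laplacian_comp_norm_sub_sq (φ := fun s => (1 + s) ^ (-(1 / 2) : ℝ)) 0 y
      ((contDiffAt_const.add contDiffAt_id).rpow_const_of_ne (by positivity)),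
    deriv_deriv_comp_const_add (· ^ (-(1 / 2) : ℝ)), deriv_deriv_rpow_const,
    deriv_comp_const_add (· ^ (-(1 / 2) : ℝ)), Real.deriv_rpow_const,
    show (-(1 / 2) - 1 : ℝ) = (-(1 / 2) - 2) + 1 by ring, Real.rpow_add_one (by positivity)]
  have hP : 0 < (1 + ρ) ^ (-(1 / 2) - 2 : ℝ) := by positivity
  have hn : (3 : ℝ) ≤ Module.finrank ℝ E := by exact_mod_cast hE
  nlinarith [mul_nonneg hP.le hρ0, mul_le_mul_of_nonneg_left hn (mul_nonneg hP.le hρ0)]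

end Laplacian

section MaximumPrinciples

variable {E : Type*} [NormedAddCommGroup E] [InnerProductSpace ℝ E] [FiniteDimensional ℝ E]
  {c : E} {κ R : ℝ}

def HasSubharmonicMinorantAt (W : E → ℝ) (x : E) : Prop :=
  ∃ φ : E → ℝ, ContDiffAt ℝ 2 φ x ∧ φ ≤ W ∧ φ x = W x ∧ 0 ≤ Δ φ x

/-- At a positive maximum of `W - ε ψ`, with `ψ` bounded and strictly superharmonic, the
touching function minus `ε ψ` would have a local maximum and a positive Laplacian. -/
theorem nonpos_of_hasSubharmonicMinorantAt (hE : 3 ≤ Module.finrank ℝ E) {W : E → ℝ}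
    (hW : Continuous W) (hsmall : ∀ ε > 0, ∀ᶠ y in cocompact E, W y < ε)
    (hmin : ∀ x, 0 < W x → HasSubharmonicMinorantAt W x) (x : E) : W x ≤ 0 := by
  obtain ⟨ψ, hψ, hψb, hΔψ⟩ := exists_pos_le_one_laplacian_neg hE
  refine le_of_forall_pos_le_add fun ε hε => ?_
  suffices h : ∀ y, W y - ε * ψ y ≤ 0 by nlinarith [h x, (hψb x).2]
  intro y₀
  by_contra! hpos
  have hWε : Continuous fun y => W y - ε * ψ y := hW.sub (continuous_const.mul hψ.continuous)
  obtain ⟨x₁, hx₁⟩ := hWε.exists_forall_ge' y₀ <| by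
    filter_upwards [hsmall _ hpos] with y hy
    nlinarith [(hψb y).1]
  obtain ⟨φ, hφ, hφW, hφx, hΔφ⟩ := hmin x₁ (by nlinarith [hx₁ y₀, (hψb x₁).1])
  have hmax : IsLocalMax (φ - ε • ψ) x₁ := Eventually.of_forall fun y => by
    simp only [Pi.sub_apply, Pi.smul_apply, smul_eq_mul]
    linarith [hφW y, hx₁ y]
  have hεψ : ContDiffAt ℝ 2 (ε • ψ) x₁ := hψ.contDiffAt.const_smul ε
  have hΔ := laplacian_nonpos_of_isLocalMax (f := φ - ε • ψ) (hφ.sub hεψ) hmax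
  rw [hφ.laplacian_sub hεψ, laplacian_smul ε hψ.contDiffAt, smul_eq_mul] at hΔ
  nlinarith [hΔψ x₁]

theorem nonpos_on_of_laplacian_pos {K U : Set E} {φ : E → ℝ} (hK : IsCompact K) (hU : IsOpen U)
    (hUK : U ⊆ K) (hφc : ContinuousOn φ K) (hφ : ∀ y ∈ U, ContDiffAt ℝ 2 φ y)
    (hΔ : ∀ y ∈ U, 0 < Δ φ y) (hbd : ∀ y ∈ K \ U, φ y ≤ 0) {y : E} (hy : y ∈ K) : φ y ≤ 0 := by
  obtain ⟨z, hzK, hmax⟩ := hK.exists_isMaxOn ⟨y, hy⟩ hφc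
  by_cases hzU : z ∈ U
  · have := laplacian_nonpos_of_isLocalMax (hφ z hzU)
      (hmax.isLocalMax (Filter.mem_of_superset (hU.mem_nhds hzU) hUK))
    exact absurd (hΔ z hzU) this.not_gt
  · exact (hmax hy).trans (hbd z ⟨hzK, hzU⟩)

theorem mul_hopfBarrier_le {u : E → ℝ} {m : ℝ} (hu : ContDiff ℝ 2 u) (hΔu : ∀ y, Δ u y ≤ 0)
    (hκ : 0 < κ) (hκR : 2 * Module.finrank ℝ E ≤ κ * R ^ 2) (hm : 0 < m)
    (hinner : ∀ y, ‖y - c‖ = R / 2 → m ≤ u y) (houter : ∀ y, ‖y - c‖ = R → 0 ≤ u y) {y : E}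
    (hy₁ : R / 2 ≤ ‖y - c‖) (hy₂ : ‖y - c‖ ≤ R) : m * hopfBarrier c κ R y ≤ u y := by
  have hcont : Continuous fun y : E => ‖y - c‖ := by fun_prop
  have hK : IsCompact ((fun y => ‖y - c‖) ⁻¹' Set.Icc (R / 2) R) :=
    Metric.isCompact_of_isClosed_isBounded (isClosed_Icc.preimage hcont)
      (Metric.isBounded_closedBall.subset fun y hy => by simpa [dist_eq_norm] using hy.2)
  have hb : ContDiff ℝ 2 (m • hopfBarrier c κ R) := contDiff_hopfBarrier.const_smul m
  have hφ : ContDiff ℝ 2 (m • hopfBarrier c κ R - u) := hb.sub hu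
  suffices (m • hopfBarrier c κ R - u) y ≤ 0 by simpa using this
  refine nonpos_on_of_laplacian_pos hK (isOpen_Ioo.preimage hcont)
    (Set.preimage_mono Set.Ioo_subset_Icc_self) hφ.continuous.continuousOn
    (fun _ _ => hφ.contDiffAt) (fun z hz => ?_) (fun z hz => ?_) ⟨hy₁, hy₂⟩
  · obtain ⟨hz₁, hz₂⟩ : R / 2 < ‖z - c‖ ∧ ‖z - c‖ < R := hz
    rw [hb.contDiffAt.laplacian_sub hu.contDiffAt,
      laplacian_smul m contDiff_hopfBarrier.contDiffAt, smul_eq_mul]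
    have hsq : (R / 2) ^ 2 < ‖z - c‖ ^ 2 := by gcongr; linarith
    have := laplacian_hopfBarrier_pos (c := c) (R := R) hκ (y := z) (by nlinarith)
    nlinarith [hΔu z, mul_pos hm this]
  · simp only [Set.mem_sdiff, Set.mem_preimage, Set.mem_Icc, Set.mem_Ioo, not_and, not_lt] at hz
    obtain ⟨⟨hz₁, hz₂⟩, hz₃⟩ := hz
    simp only [Pi.sub_apply, Pi.smul_apply, smul_eq_mul, sub_nonpos]
    rcases hz₁.eq_or_lt with h | h
    · nlinarith [hopfBarrier_le_one (c := c) (R := R) hκ.le z, hinner z h.symm]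
    · have h' : ‖z - c‖ = R := hz₂.antisymm (hz₃ h)
      rw [hopfBarrier_eq_zero h', mul_zero]
      exact houter z h'

/-- Strong minimum principle: otherwise the largest zero-free ball about a point where `u > 0`
touches the zero set at some `y₀`, and Hopf's barrier forces a nonzero derivative of `u` at its
minimum point `y₀`. -/
theorem eq_zero_of_nonneg_of_laplacian_nonpos {u : E → ℝ} (hu : ContDiff ℝ 2 u)
    (h0 : ∀ y, 0 ≤ u y) (hΔu : ∀ y, Δ u y ≤ 0) {x₀ : E} (hx₀ : u x₀ = 0) (x : E) : u x = 0 := by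
  by_contra hx
  have : Nontrivial E := nontrivial_of_ne x x₀ fun h => hx (h ▸ hx₀)
  have hZ : IsClosed {y | u y = 0} := isClosed_eq hu.continuous continuous_const
  obtain ⟨y₀, hy₀, hy₀x⟩ := hZ.exists_infDist_eq_dist ⟨x₀, hx₀⟩ x
  set R := Metric.infDist x {y | u y = 0}
  have hR : 0 < R := (hZ.notMem_iff_infDist_pos ⟨x₀, hx₀⟩).mp hx
  have hball : ∀ y, ‖y - x‖ < R → 0 < u y := fun y hy => (h0 y).lt_of_ne' fun h =>
    (Metric.infDist_le_dist_of_mem (x := x) (show y ∈ {y | u y = 0} from h)).not_gt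
      (by rwa [dist_comm, dist_eq_norm])
  obtain ⟨m, hm, hinner⟩ : ∃ m > 0, ∀ y, ‖y - x‖ = R / 2 → m ≤ u y := by
    obtain ⟨z, hz, hmin⟩ := (isCompact_sphere x (R / 2)).exists_isMinOn
      (NormedSpace.sphere_nonempty.mpr (by positivity)) hu.continuous.continuousOn
    have hz' : ‖z - x‖ = R / 2 := by simpa [dist_eq_norm] using hz
    exact ⟨u z, hball z (by linarith), fun y hy => hmin (by simpa [dist_eq_norm] using hy)⟩
  set κ := 2 * (Module.finrank ℝ E + 1) / R ^ 2
  have hκ : 0 < κ := by positivity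
  have hκR : 2 * Module.finrank ℝ E ≤ κ * R ^ 2 := by
    rw [div_mul_cancel₀ _ (by positivity)]; linarith
  refine hm.not_ge (nonpos_of_mul_hopfBarrier_le (hu.differentiable two_ne_zero y₀) h0 hy₀
    (by rw [← dist_eq_norm, dist_comm, ← hy₀x]) hR hκ fun y hy₁ hy₂ => ?_)
  exact mul_hopfBarrier_le hu hΔu hκ hκR hm hinner (fun y _ => h0 y) hy₁ hy₂

end MaximumPrinciples

section System

variable {E : Type*} [NormedAddCommGroup E] [InnerProductSpace ℝ E] [FiniteDimensional ℝ E]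
  {p q r s k σ : ℝ} {u v : E → ℝ}

theorem hasSubharmonicMinorantAt_of_pos (hu : ContDiff ℝ 2 u) (hv : ContDiff ℝ 2 v)
    (hequ : ∀ x, -Δ u x = |v x| ^ p * |u x| ^ (r - 1) * u x)
    (heqv : ∀ x, -Δ v x = |u x| ^ q * |v x| ^ (s - 1) * v x) (hk : 0 < k) (hσ : 0 < σ)
    (hσ1 : σ ≤ 1) (hps : s ≤ p) (hkσ : σ * k ^ (p - s + 1) = 1)
    (hσq : σ * (p - s + 1) = q - r + 1) {x : E} (hux : 0 < u x)
    (hWx : 0 < |v x| - k * u x ^ σ) :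
    HasSubharmonicMinorantAt (fun y => |v y| - k * u y ^ σ) x := by
  obtain ⟨e, he, hev⟩ := exists_mul_le_abs_mul_eq_abs (v x)
  have huσ : ContDiffAt ℝ 2 (fun y => u y ^ σ) x := hu.contDiffAt.rpow_const_of_ne hux.ne'
  have hev' : ContDiffAt ℝ 2 (e • v) x := hv.contDiffAt.const_smul e
  have hkuσ : ContDiffAt ℝ 2 (k • fun y => u y ^ σ) x := huσ.const_smul k
  refine ⟨e • v - k • fun y => u y ^ σ, hev'.sub hkuσ, fun y => ?_, by simp [hev], ?_⟩
  · simpa using he (v y)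
  have hV : k * u x ^ σ ≤ |v x| := by linarith
  have hV0 : 0 < |v x| := (by positivity : 0 < k * u x ^ σ).trans_le hV
  have hΔu : Δ u x = -(|v x| ^ p * u x ^ r) := by
    have h := hequ x
    rw [abs_of_pos hux, mul_assoc, ← Real.rpow_add_one hux.ne', sub_add_cancel] at h
    linarith
  have hΔv : e * Δ v x = -(u x ^ q * |v x| ^ s) := by
    have h := heqv x
    rw [abs_of_pos hux] at h
    rw [show e * Δ v x = -(u x ^ q * (|v x| ^ (s - 1) * (e * v x))) by
      linear_combination (-e) * h, hev, ← Real.rpow_add_one hV0.ne', sub_add_cancel]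
  rw [hev'.laplacian_sub hkuσ, laplacian_smul e hv.contDiffAt, laplacian_smul k huσ, smul_eq_mul,
    smul_eq_mul, laplacian_comp (φ := fun t => t ^ σ) (stdOrthonormalBasis ℝ E) hu.contDiffAt
      (Real.contDiffAt_rpow_const_of_ne hux.ne'), deriv_deriv_rpow_const, Real.deriv_rpow_const,
    hΔu, hΔv]
  have key := rpow_mul_rpow_le_of_mul_rpow_le hux hk hσ hps hkσ hσq hV
  have hQ : 0 ≤ ∑ i, lineDeriv ℝ u x (stdOrthonormalBasis ℝ E i) ^ 2 :=
    Finset.sum_nonneg fun i _ => sq_nonneg _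
  have hcurv : σ * (σ - 1) * u x ^ (σ - 2) ≤ 0 :=
    mul_nonpos_of_nonpos_of_nonneg (mul_nonpos_of_nonneg_of_nonpos hσ.le (by linarith))
      (by positivity)
  nlinarith [mul_nonpos_of_nonpos_of_nonneg hcurv hQ]

theorem hasSubharmonicMinorantAt_of_eq_zero (hv : ContDiff ℝ 2 v)
    (heqv : ∀ x, -Δ v x = |u x| ^ q * |v x| ^ (s - 1) * v x) (hu0 : ∀ y, u y = 0) (hq : q ≠ 0)
    (hσ : σ ≠ 0) (x : E) : HasSubharmonicMinorantAt (fun y => |v y| - k * u y ^ σ) x := by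
  obtain ⟨e, he, hev⟩ := exists_mul_le_abs_mul_eq_abs (v x)
  have hΔv : Δ v x = 0 := by simpa [hu0, Real.zero_rpow hq] using heqv x
  refine ⟨e • v, hv.contDiffAt.const_smul e, fun y => ?_, ?_, ?_⟩
  · simpa [hu0, Real.zero_rpow hσ] using he (v y)
  · simp [hu0, Real.zero_rpow hσ, hev]
  · simp [laplacian_smul e hv.contDiffAt, hΔv]

theorem abs_le_mul_rpow_of_system (hE : 3 ≤ Module.finrank ℝ E) (hu : ContDiff ℝ 2 u)
    (hv : ContDiff ℝ 2 v) (hu0 : ∀ y, 0 ≤ u y)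
    (hequ : ∀ x, -Δ u x = |v x| ^ p * |u x| ^ (r - 1) * u x)
    (heqv : ∀ x, -Δ v x = |u x| ^ q * |v x| ^ (s - 1) * v x) (hq : q ≠ 0)
    (hvsmall : ∀ ε > 0, ∀ᶠ y in cocompact E, |v y| < ε) (hk : 0 < k) (hσ : 0 < σ)
    (hσ1 : σ ≤ 1) (hps : s ≤ p) (hkσ : σ * k ^ (p - s + 1) = 1)
    (hσq : σ * (p - s + 1) = q - r + 1) (x : E) : |v x| ≤ k * u x ^ σ := by
  have hΔu : ∀ y, Δ u y ≤ 0 := fun y => by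
    have := hequ y
    have : 0 ≤ |v y| ^ p * |u y| ^ (r - 1) * u y := by have := hu0 y; positivity
    linarith
  have hW : Continuous fun y => |v y| - k * u y ^ σ :=
    hv.continuous.abs.sub (continuous_const.mul (hu.continuous.rpow_const fun _ => Or.inr hσ.le))
  refine sub_nonpos.mp
    (nonpos_of_hasSubharmonicMinorantAt hE hW (fun ε hε => ?_) (fun y hy => ?_) x)
  · filter_upwards [hvsmall ε hε] with y hy
    nlinarith [Real.rpow_nonneg (hu0 y) σ]
  rcases em (∃ x₀, u x₀ = 0) with ⟨x₀, hx₀⟩ | hzero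
  · exact hasSubharmonicMinorantAt_of_eq_zero hv heqv
      (eq_zero_of_nonneg_of_laplacian_nonpos hu hu0 hΔu hx₀) hq hσ.ne' y
  · exact hasSubharmonicMinorantAt_of_pos hu hv hequ heqv hk hσ hσ1 hps hkσ hσq
      ((hu0 y).lt_of_ne' fun h => hzero ⟨y, h⟩) hy

theorem eventually_abs_lt_of_rpow_le {f : E → ℝ} {b γ K : ℝ} (hb : 0 < b) (hγ : 0 < γ)
    (hf : ∀ x, |f x| ^ b ≤ K * (1 + ‖x‖ ^ γ)⁻¹) {ε : ℝ} (hε : 0 < ε) :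
    ∀ᶠ x in cocompact E, |f x| < ε := by
  have hlim : Tendsto (fun x : E => K * (1 + ‖x‖ ^ γ)⁻¹) (cocompact E) (𝓝 0) := by
    have := ((tendsto_atTop_add_const_left _ 1 (tendsto_rpow_atTop hγ)).inv_tendsto_atTop
      |>.const_mul K).comp (tendsto_norm_cocompact_atTop (E := E))
    simpa [Function.comp_def] using this
  filter_upwards [hlim.eventually (gt_mem_nhds (Real.rpow_pos_of_pos hε b))] with x hx
  by_contra! h
  linarith [Real.rpow_le_rpow hε.le h hb.le, hf x]

end System

theorem lap_eq_laplacian {n : ℕ} (f : EuclideanSpace ℝ (Fin n) → ℝ) : lap f = Δ f := by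
  rw [laplacian_eq_iteratedFDeriv_orthonormalBasis f (EuclideanSpace.basisFun (Fin n) ℝ)]
  ext x
  simp [lap]

theorem stmt_10_general (n : ℕ) (hn : 3 ≤ n) (p q r s : ℝ)
    (hq : 1 ≤ q)
    (h1 : q - r ≤ p - s) (h2 : -1 < q - r) (hps : s ≤ p)
    (a b : ℝ)
    (hb' : (n : ℝ) / (n - 2) < b)
    (u v : EuclideanSpace ℝ (Fin n) → ℝ)
    (hu : ContDiff ℝ 2 u) (hv : ContDiff ℝ 2 v)
    (hupos : ∀ x, 0 ≤ u x)
    (hequ : ∀ x, - lap u x = |v x| ^ p * |u x| ^ (r - 1) * u x)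
    (heqv : ∀ x, - lap v x = |u x| ^ q * |v x| ^ (s - 1) * v x)
    (K : ℝ)
    (hdecay : ∀ x, |u x| ^ a + |v x| ^ b ≤ K * (1 + ‖x‖ ^ (n : ℝ))⁻¹) :
    ∀ x, |v x| ^ (p - s + 1) / (p - s + 1) ≤ u x ^ (q - r + 1) / (q - r + 1) := by
  have hn' : (3 : ℝ) ≤ n := by exact_mod_cast hn
  have hα : 0 < p - s + 1 := by linarith
  have hβ : 0 < q - r + 1 := by linarith
  have hσ : 0 < (q - r + 1) / (p - s + 1) := div_pos hβ hα
  have hσq : (q - r + 1) / (p - s + 1) * (p - s + 1) = q - r + 1 := div_mul_cancel₀ _ hα.ne'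
  obtain ⟨k, hk, hkσ⟩ := exists_pos_mul_rpow_eq_one hσ hα.ne'
  have hb : 0 < b := (div_pos (by linarith) (by linarith)).trans hb'
  have hvb (y : EuclideanSpace ℝ (Fin n)) : |v y| ^ b ≤ K * (1 + ‖y‖ ^ (n : ℝ))⁻¹ := by
    linarith [hdecay y, Real.rpow_nonneg (abs_nonneg (u y)) a]
  have hvsmall (ε : ℝ) (hε : 0 < ε) : ∀ᶠ y in cocompact _, |v y| < ε :=
    eventually_abs_lt_of_rpow_le hb (by linarith) hvb hε
  rw [lap_eq_laplacian] at hequ heqv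
  intro x
  exact rpow_div_le_rpow_div_of_abs_le_mul_rpow (hupos x) hk hα hβ hkσ hσq
    (abs_le_mul_rpow_of_system (by simpa using hn) hu hv hupos hequ heqv (by linarith) hvsmall hk
      hσ ((div_le_one hα).mpr (by linarith)) hps hkσ hσq x)

theorem stmt_10 (n : ℕ) (hn : 3 ≤ n) (p q r s : ℝ)
    (hp : 1 ≤ p) (hq : 1 ≤ q) (hr : 0 ≤ r) (hs : 0 ≤ s)
    (h1 : q - r ≤ p - s) (h2 : -1 < q - r) (hps : s ≤ p)
    (a b : ℝ)
    (ha : a = n * (p * q - (r - 1) * (s - 1)) / (2 * (p - s + 1)))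
    (hb : b = n * (p * q - (r - 1) * (s - 1)) / (2 * (q - r + 1)))
    (ha' : (n : ℝ) / (n - 2) < a) (hb' : (n : ℝ) / (n - 2) < b)
    (u v : EuclideanSpace ℝ (Fin n) → ℝ)
    (hu : ContDiff ℝ 2 u) (hv : ContDiff ℝ 2 v)
    (hupos : ∀ x, 0 ≤ u x)
    (hequ : ∀ x, - lap u x = |v x| ^ p * |u x| ^ (r - 1) * u x)
    (heqv : ∀ x, - lap v x = |u x| ^ q * |v x| ^ (s - 1) * v x)
    (K : ℝ)
    (hdecay : ∀ x, |u x| ^ a + |v x| ^ b ≤ K * (1 + ‖x‖ ^ (n : ℝ))⁻¹) :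
    ∀ x, |v x| ^ (p - s + 1) / (p - s + 1) ≤ u x ^ (q - r + 1) / (q - r + 1) :=
  stmt_10_general n hn p q r s hq h1 h2 hps a b hb' u v hu hv hupos hequ heqv K hdecay
end

section
/- Let n ≥ 3, s ∈ (0,1), q + s = n/(n-2), b > n/(n-2), and let (σ_α) be defined by σ₀ = b and 1/σ_{α+1} = s/σ_α + ((n-2)q-2)/n. Then σ_α decreases to n/(n-2), and (n-2)σ_α - n = n((n-2)b - n)s^α / ((n-2)b - ((n-2)b - n)s^α), so that (n-2)σ_α - n is asymptotically equivalent to (n((n-2)b - n)/((n-2)b)) s^α as α → ∞. -/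
/-!
With `L = n/(n-2)`, the reciprocals `1/σ_α` satisfy the affine recursion
`x_{α+1} = s x_α + (1 - s)/L`, whose fixed point is `1/L`. Hence
`1/σ_α - 1/L = s^α (1/b - 1/L)`, which inverts to `σ_α = L b / (b - (b - L) s^α)`.
Every claim follows from this closed form, since `s^α ↓ 0`.
-/

open Filter Topology

theorem affine_recurrence_eq {R : Type*} [CommRing R] {x : ℕ → R} {s c : R}
    (h : ∀ k, x (k + 1) = s * x k + (1 - s) * c) (k : ℕ) :
    x k = c + s ^ k * (x 0 - c) := by
  induction k with
  | zero => ring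
  | succ k ih => rw [h, ih]; ring

namespace ReciprocalRecurrence

variable {L b s : ℝ} {σ : ℕ → ℝ}

theorem inv_eq (hrec : ∀ α, 1 / σ (α + 1) = s / σ α + (1 - s) / L) (h0 : σ 0 = b) (α : ℕ) :
    (σ α)⁻¹ = L⁻¹ + s ^ α * (b⁻¹ - L⁻¹) := by
  have hx : ∀ k, (σ (k + 1))⁻¹ = s * (σ k)⁻¹ + (1 - s) * L⁻¹ := fun k => by
    simpa only [one_div, div_eq_mul_inv, one_mul] using hrec k
  simpa only [h0] using affine_recurrence_eq (x := fun k => (σ k)⁻¹) hx α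

theorem eq_div (hrec : ∀ α, 1 / σ (α + 1) = s / σ α + (1 - s) / L) (h0 : σ 0 = b)
    (hL : L ≠ 0) (hb : b ≠ 0) (α : ℕ) :
    σ α = L * b / (b - (b - L) * s ^ α) := by
  have hinv : L⁻¹ + s ^ α * (b⁻¹ - L⁻¹) = (b - (b - L) * s ^ α) / (L * b) := by
    field_simp
    ring
  rw [← inv_inv (σ α), inv_eq hrec h0, hinv, inv_div]

theorem denom_pos (hs0 : 0 ≤ s) (hs1 : s ≤ 1) (hL : 0 < L) (hLb : L < b) (α : ℕ) :
    0 < b - (b - L) * s ^ α := by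
  nlinarith [pow_le_one₀ hs0 hs1 (n := α)]

theorem antitone (hrec : ∀ α, 1 / σ (α + 1) = s / σ α + (1 - s) / L) (h0 : σ 0 = b)
    (hs0 : 0 ≤ s) (hs1 : s ≤ 1) (hL : 0 < L) (hLb : L < b) : Antitone σ := by
  intro i j hij
  have hb : b ≠ 0 := (hL.trans hLb).ne'
  rw [eq_div hrec h0 hL.ne' hb, eq_div hrec h0 hL.ne' hb]
  refine div_le_div_of_nonneg_left (by nlinarith) (denom_pos hs0 hs1 hL hLb i) ?_
  exact sub_le_sub_left (mul_le_mul_of_nonneg_left (pow_le_pow_of_le_one hs0 hs1 hij)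
    (by linarith)) b

theorem tendsto_denom (hs0 : 0 ≤ s) (hs1 : s < 1) :
    Tendsto (fun α => b - (b - L) * s ^ α) atTop (𝓝 b) := by
  simpa using tendsto_const_nhds.sub
    (tendsto_const_nhds.mul (tendsto_pow_atTop_nhds_zero_of_lt_one hs0 hs1))

theorem tendsto (hrec : ∀ α, 1 / σ (α + 1) = s / σ α + (1 - s) / L) (h0 : σ 0 = b)
    (hs0 : 0 ≤ s) (hs1 : s < 1) (hL : L ≠ 0) (hb : b ≠ 0) : Tendsto σ atTop (𝓝 L) := by
  have h := (tendsto_const_nhds (x := L * b)).div (tendsto_denom (L := L) hs0 hs1) hb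
  rw [mul_div_cancel_right₀ L hb] at h
  exact h.congr fun α => (eq_div hrec h0 hL hb α).symm

theorem sub_eq (hrec : ∀ α, 1 / σ (α + 1) = s / σ α + (1 - s) / L) (h0 : σ 0 = b)
    (hs0 : 0 ≤ s) (hs1 : s ≤ 1) (hL : 0 < L) (hLb : L < b) (α : ℕ) :
    σ α - L = L * (b - L) * s ^ α / (b - (b - L) * s ^ α) := by
  have hD := (denom_pos hs0 hs1 hL hLb α).ne'
  rw [eq_div hrec h0 hL.ne' (hL.trans hLb).ne', eq_div_iff hD, sub_mul, div_mul_cancel₀ _ hD]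
  ring

theorem tendsto_sub_div (hrec : ∀ α, 1 / σ (α + 1) = s / σ α + (1 - s) / L) (h0 : σ 0 = b)
    (hs0 : 0 < s) (hs1 : s < 1) (hL : 0 < L) (hLb : L < b) :
    Tendsto (fun α => (σ α - L) / (L * (b - L) / b * s ^ α)) atTop (𝓝 1) := by
  have hb : b ≠ 0 := (hL.trans hLb).ne'
  have hratio : ∀ α, b / (b - (b - L) * s ^ α) = (σ α - L) / (L * (b - L) / b * s ^ α) := by
    intro α
    have hsα : s ^ α ≠ 0 := (pow_pos hs0 α).ne'
    have hbL : b - L ≠ 0 := (sub_pos.2 hLb).ne'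
    rw [sub_eq hrec h0 hs0.le hs1.le hL hLb]
    field_simp
  have h := (tendsto_const_nhds (x := b)).div (tendsto_denom (L := L) hs0.le hs1) hb
  rw [div_self hb] at h
  exact h.congr hratio

end ReciprocalRecurrence

theorem stmt_12_general (n : ℕ) (hn : 3 ≤ n) (q s b : ℝ)
    (hs0 : 0 < s) (hs1 : s < 1)
    (hqs : q + s = (n : ℝ) / (n - 2))
    (hb : (n : ℝ) / (n - 2) < b)
    (σ : ℕ → ℝ) (hσ0 : σ 0 = b)
    (hσrec : ∀ α, 1 / σ (α + 1) = s / σ α + (((n : ℝ) - 2) * q - 2) / n) :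
    Antitone σ ∧
    Tendsto σ atTop (nhds ((n : ℝ) / (n - 2))) ∧
    (∀ α, ((n : ℝ) - 2) * σ α - n =
      (n : ℝ) * (((n : ℝ) - 2) * b - n) * s ^ α /
        (((n : ℝ) - 2) * b - (((n : ℝ) - 2) * b - n) * s ^ α)) ∧
    Tendsto (fun α => (((n : ℝ) - 2) * σ α - n) /
        (((n : ℝ) * (((n : ℝ) - 2) * b - n) / (((n : ℝ) - 2) * b)) * s ^ α))
      atTop (nhds 1) := by
  obtain ⟨m, hm, hnm⟩ : ∃ m : ℝ, 0 < m ∧ (n : ℝ) - 2 = m :=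
    ⟨_, by linarith [show (3 : ℝ) ≤ n by exact_mod_cast hn], rfl⟩
  obtain ⟨L, hL⟩ : ∃ L, (n : ℝ) / m = L := ⟨_, rfl⟩
  have hnL : (n : ℝ) = m * L := by rw [← hL, mul_div_cancel₀ _ hm.ne']
  have hmL : m * L = m + 2 := by linarith
  have hL0 : 0 < L := by rw [← hL]; exact div_pos (by linarith) hm
  rw [hnm, hL] at hb hqs ⊢
  have hrec : ∀ α, 1 / σ (α + 1) = s / σ α + (1 - s) / L := by
    intro α
    rw [hσrec, hnm, hnL, show q = L - s by linarith]
    field_simp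
    linear_combination hmL
  rw [hnL]
  have hscale : ∀ α, (m * σ α - m * L) / (m * L * (m * b - m * L) / (m * b) * s ^ α)
      = (σ α - L) / (L * (b - L) / b * s ^ α) := fun α => by
    rw [← mul_sub, show m * L * (m * b - m * L) / (m * b) = m * (L * (b - L) / b) by
      field_simp, mul_assoc, mul_div_mul_left _ _ hm.ne']
  refine ⟨ReciprocalRecurrence.antitone hrec hσ0 hs0.le hs1.le hL0 hb,
    ReciprocalRecurrence.tendsto hrec hσ0 hs0.le hs1 hL0.ne' (hL0.trans hb).ne', fun α => ?_,
    (ReciprocalRecurrence.tendsto_sub_div hrec hσ0 hs0 hs1 hL0 hb).congr fun α => (hscale α).symm⟩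
  rw [← mul_sub, ReciprocalRecurrence.sub_eq hrec hσ0 hs0.le hs1.le hL0 hb α,
    show m * b - (m * b - m * L) * s ^ α = m * (b - (b - L) * s ^ α) by ring]
  field_simp

theorem stmt_12 (n : ℕ) (hn : 3 ≤ n) (q s b : ℝ)
    (hs0 : 0 < s) (hs1 : s < 1)
    (hqs : q + s = (n : ℝ) / (n - 2))
    (hb : (n : ℝ) / (n - 2) < b)
    (σ : ℕ → ℝ) (hσpos : ∀ α, 0 < σ α) (hσ0 : σ 0 = b)
    (hσrec : ∀ α, 1 / σ (α + 1) = s / σ α + (((n : ℝ) - 2) * q - 2) / n) :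
    Antitone σ ∧
    Tendsto σ atTop (nhds ((n : ℝ) / (n - 2))) ∧
    (∀ α, ((n : ℝ) - 2) * σ α - n =
      (n : ℝ) * (((n : ℝ) - 2) * b - n) * s ^ α /
        (((n : ℝ) - 2) * b - (((n : ℝ) - 2) * b - n) * s ^ α)) ∧
    Tendsto (fun α => (((n : ℝ) - 2) * σ α - n) /
        (((n : ℝ) * (((n : ℝ) - 2) * b - n) / (((n : ℝ) - 2) * b)) * s ^ α))
      atTop (nhds 1) :=
  stmt_12_general n hn q s b hs0 hs1 hqs hb σ hσ0 hσrec
end
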